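/- arXiv:1706.06950 — 3 statements merged into one kernel-verified Lean document; each statement's English description precedes it below -/
import Mathlib

section
/- Let (E,‖·‖) be a Banach space, let h: E → E be continuously differentiable with derivative dh: E → 𝓛(E), and let v₀ ∈ E, δ > 0, q ∈ (0,1) satisfy: (i) T := dh(v₀) ∈ 𝓛(E) is an isomorphism; (ii) ‖h(v₀)‖ < δ(1−q)/‖T^{-1}‖_{𝓛(E)}; (iii) ‖dh(y) − T‖_{𝓛(E)} ≤ q/‖T^{-1}‖_{𝓛(E)} for all y ∈ B_δ(v₀). Then h has a unique zero in B_δ(v₀). -/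
open Filter Metric

/-!
By hypothesis (iii) and the mean value inequality, `h` is approximated on `B_δ(v₀)` by the
isomorphism `T` up to the constant `c = q / ‖T⁻¹‖ < ‖T⁻¹‖⁻¹`. Such a map is injective on the ball,
and the contraction argument behind the inverse function theorem shows that the image of each
closed ball `B̄_ε(v₀) ⊆ B_δ(v₀)` contains the closed ball around `h v₀` of radius
`(‖T⁻¹‖⁻¹ - c) ε`; hypothesis (ii) puts `0` in one of these.
-/

open scoped NNReal

theorem Convex.approximatesLinearOn_of_hasFDerivWithinAt {𝕜 E F : Type*}
    [NontriviallyNormedField 𝕜] [IsRCLikeNormedField 𝕜]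
    [NormedAddCommGroup E] [NormedSpace ℝ E] [NormedSpace 𝕜 E]
    [NormedAddCommGroup F] [NormedSpace 𝕜 F]
    {f : E → F} {f' : E → E →L[𝕜] F} {A : E →L[𝕜] F} {s : Set E} {c : ℝ≥0}
    (hs : Convex ℝ s) (hf : ∀ x ∈ s, HasFDerivWithinAt f (f' x) s x)
    (bound : ∀ x ∈ s, ‖f' x - A‖ ≤ c) :
    ApproximatesLinearOn f A s c := fun _ hx _ hy =>
  hs.norm_image_sub_le_of_norm_hasFDerivWithin_le' hf bound hy hx

theorem ApproximatesLinearOn.existsUnique_mem_ball_apply_eq {𝕜 E F : Type*}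
    [NontriviallyNormedField 𝕜] [NormedAddCommGroup E] [NormedSpace 𝕜 E] [CompleteSpace E]
    [NormedAddCommGroup F] [NormedSpace 𝕜 F]
    {f : E → F} {f' : E ≃L[𝕜] F} {b : E} {δ : ℝ} {c : ℝ≥0}
    (hf : ApproximatesLinearOn f (f' : E →L[𝕜] F) (ball b δ) c)
    (hc : c < ‖(f'.symm : F →L[𝕜] E)‖₊⁻¹) {y : F}
    (hy : dist y (f b) < ((‖(f'.symm : F →L[𝕜] E)‖₊ : ℝ)⁻¹ - c) * δ) :
    ∃! x, x ∈ ball b δ ∧ f x = y := by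
  set κ : ℝ := (‖(f'.symm : F →L[𝕜] E)‖₊ : ℝ)⁻¹ - c
  have hκ : 0 < κ := sub_pos.2 (by exact_mod_cast hc)
  set ε := dist y (f b) / κ
  have hεδ : ε < δ := (div_lt_iff₀' hκ).2 hy
  have hsub : closedBall b ε ⊆ ball b δ := closedBall_subset_ball hεδ
  obtain ⟨x, hx, rfl⟩ := hf.surjOn_closedBall_of_nonlinearRightInverse
    f'.toNonlinearRightInverse (by positivity) hsub
    (mem_closedBall.2 (mul_div_cancel₀ _ hκ.ne').ge)
  exact ⟨x, ⟨hsub hx, rfl⟩, fun x' hx' => hf.injOn (Or.inr hc) hx'.1 (hsub hx) hx'.2⟩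

theorem shadowing_lemma_general {E : Type*} [NormedAddCommGroup E] [NormedSpace ℝ E]
    [CompleteSpace E]
    (h : E → E) (dh : E → E →L[ℝ] E)
    (hderiv : ∀ x : E, HasFDerivAt h (dh x) x)
    (v₀ : E) (δ q : ℝ) (hq0 : 0 < q) (hq1 : q < 1)
    (T : E ≃L[ℝ] E) (hT : (T : E →L[ℝ] E) = dh v₀)
    (hsmall : ‖h v₀‖ < δ * (1 - q) / ‖(T.symm : E →L[ℝ] E)‖)
    (hlip : ∀ y ∈ ball v₀ δ, ‖dh y - dh v₀‖ ≤ q / ‖(T.symm : E →L[ℝ] E)‖) :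
    ∃! x : E, x ∈ ball v₀ δ ∧ h x = 0 := by
  set M := ‖(T.symm : E →L[ℝ] E)‖
  have hM : 0 < M := by
    refine (norm_nonneg _).lt_of_ne' fun hM0 : M = 0 => ?_
    rw [hM0, div_zero] at hsmall
    exact (norm_nonneg _).not_gt hsmall
  set c : ℝ≥0 := ⟨q / M, by positivity⟩
  have happrox : ApproximatesLinearOn h (T : E →L[ℝ] E) (ball v₀ δ) c :=
    (convex_ball v₀ δ).approximatesLinearOn_of_hasFDerivWithinAt
      (fun x _ => (hderiv x).hasFDerivWithinAt) (fun y hy => hT ▸ hlip y hy)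
  have hinv : (‖(T.symm : E →L[ℝ] E)‖₊ : ℝ)⁻¹ = 1 / M := by
    rw [coe_nnnorm, one_div]
  refine happrox.existsUnique_mem_ball_apply_eq ?_ ?_
  · rw [← NNReal.coe_lt_coe, NNReal.coe_inv, hinv]
    exact div_lt_div_of_pos_right hq1 hM
  · rw [hinv, dist_comm, dist_zero_right]
    calc ‖h v₀‖ < δ * (1 - q) / M := hsmall
      _ = (1 / M - q / M) * δ := by ring

/-- Shadowing Lemma.
Let `E` be a Banach space, `h : E → E` continuously differentiable with derivative `dh`,
and let `v₀ ∈ E`, `δ > 0`, `q ∈ (0,1)` satisfy: (i) `T := dh v₀` is an isomorphism (with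
inverse `T.symm`); (ii) `‖h v₀‖ < δ(1−q)/‖T⁻¹‖`; (iii) `‖dh y − T‖ ≤ q/‖T⁻¹‖` for all
`y ∈ B_δ(v₀)`.  Then `h` has a unique zero in `B_δ(v₀)`. -/
theorem shadowing_lemma {E : Type*} [NormedAddCommGroup E] [NormedSpace ℝ E]
    [CompleteSpace E]
    (h : E → E) (dh : E → E →L[ℝ] E)
    (hderiv : ∀ x : E, HasFDerivAt h (dh x) x) (hcont : Continuous dh)
    (v₀ : E) (δ q : ℝ) (hδ : 0 < δ) (hq0 : 0 < q) (hq1 : q < 1)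
    (T : E ≃L[ℝ] E) (hT : (T : E →L[ℝ] E) = dh v₀)
    (hsmall : ‖h v₀‖ < δ * (1 - q) / ‖(T.symm : E →L[ℝ] E)‖)
    (hlip : ∀ y ∈ ball v₀ δ, ‖dh y - dh v₀‖ ≤ q / ‖(T.symm : E →L[ℝ] E)‖) :
    ∃! x : E, x ∈ ball v₀ δ ∧ h x = 0 :=
  shadowing_lemma_general h dh hderiv v₀ δ q hq0 hq1 T hT hsmall hlip
end

section
/- Let (E,‖·‖) be a Banach space, let h: E → E be differentiable with derivative dh: E → 𝓛(E) uniformly continuous on bounded subsets of E, and let (v_k)_k be a bounded sequence in E such that: (i) h(v_k) → 0 as k → ∞; (ii) dh(v_k) ∈ 𝓛(E) is an isomorphism for each k, and sup_{k∈ℕ} ‖dh(v_k)^{-1}‖_{𝓛(E)} < ∞. Then there exist k₀ ∈ ℕ and u_k ∈ E for k ≥ k₀ with h(u_k) = 0 for k ≥ k₀ and ‖u_k − v_k‖ → 0 as k → ∞; moreover the sequence (u_k)_k is uniquely determined by these two properties for large k. -/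
open Filter

/-- Corollary of the Shadowing Lemma.
Let `E` be a Banach space, `h : E → E` differentiable with derivative `dh` uniformly
continuous on bounded sets, and `(v_k)` a bounded sequence with `h(v_k) → 0` such that each
`dh(v_k)` is an isomorphism with uniformly bounded inverses.  Then there are `k₀` and zeros
`u_k` of `h` for `k ≥ k₀` with `‖u_k − v_k‖ → 0`, and `(u_k)` is uniquely determined by
these properties for large `k`. -/
theorem shadowing_corollary {E : Type*} [NormedAddCommGroup E] [NormedSpace ℝ E]
    [CompleteSpace E]
    (h : E → E) (dh : E → E →L[ℝ] E)
    (hderiv : ∀ x : E, HasFDerivAt h (dh x) x)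
    (hucont : ∀ s : Set E, Bornology.IsBounded s → UniformContinuousOn dh s)
    (v : ℕ → E) (hbdd : Bornology.IsBounded (Set.range v))
    (hzero : Tendsto (fun k => h (v k)) atTop (nhds 0))
    (T : ℕ → E ≃L[ℝ] E) (hT : ∀ k, (T k : E →L[ℝ] E) = dh (v k))
    (C : ℝ) (hC : ∀ k, ‖((T k).symm : E →L[ℝ] E)‖ ≤ C) :
    ∃ (k₀ : ℕ) (u : ℕ → E),
      (∀ k ≥ k₀, h (u k) = 0) ∧
      Tendsto (fun k => ‖u k - v k‖) atTop (nhds 0) ∧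
      ∀ u' : ℕ → E,
        (∀ᶠ k in atTop, h (u' k) = 0) →
        Tendsto (fun k => ‖u' k - v k‖) atTop (nhds 0) →
        ∀ᶠ k in atTop, u' k = u k := by
  classical
  rcases subsingleton_or_nontrivial E with hE | hE
  · refine ⟨0, v, fun k _ => Subsingleton.elim _ _, ?_,
      fun u' _ _ => Eventually.of_forall fun k => Subsingleton.elim _ _⟩
    simp only [sub_self, norm_zero]
    exact tendsto_const_nhds
  -- nontrivial case
  have hC0 : 0 ≤ C := le_trans (norm_nonneg _) (hC 0)
  set C' : ℝ := C + 1 with hC'def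
  have hC'pos : 0 < C' := by simp only [hC'def]; linarith
  -- positivity of the norms of the inverses
  have hNpos : ∀ k, 0 < ‖((T k).symm : E →L[ℝ] E)‖ := by
    intro k
    rw [norm_pos_iff]
    intro h0
    obtain ⟨x, hx⟩ := exists_ne (0 : E)
    have := congrArg (fun f : E →L[ℝ] E => f (T k x)) h0
    simp only [ContinuousLinearEquiv.coe_coe, ContinuousLinearEquiv.symm_apply_apply,
      ContinuousLinearMap.zero_apply] at this
    exact hx this
  -- the bounded neighborhood
  set S : Set E := Metric.cthickening 1 (Set.range v) with hSdef
  have hSbdd : Bornology.IsBounded S := hbdd.cthickening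
  have hballS : ∀ k, Metric.closedBall (v k) 1 ⊆ S := fun k =>
    Metric.closedBall_subset_cthickening (Set.mem_range_self k) 1
  obtain ⟨δ, hδpos, hδ⟩ :=
    (Metric.uniformContinuousOn_iff).1 (hucont S hSbdd) (1 / (2 * C')) (by positivity)
  set r : ℝ := min δ 1 / 2 with hrdef
  have hrpos : 0 < r := by
    have : 0 < min δ 1 := lt_min hδpos one_pos
    simp only [hrdef]; linarith
  have hrδ : r < δ := by
    have h1 : min δ 1 ≤ δ := min_le_left _ _
    simp only [hrdef]; linarith
  have hr1 : r ≤ 1 := by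
    have h1 : min δ 1 ≤ 1 := min_le_right _ _
    simp only [hrdef]; linarith
  set c : NNReal := ⟨1 / (2 * C'), by positivity⟩ with hcdef
  have hcc : (c : ℝ) = 1 / (2 * C') := rfl
  -- approximation property on the ball of radius r
  have approx : ∀ k, ApproximatesLinearOn h (dh (v k)) (Metric.closedBall (v k) r) c := by
    intro k x hx y hy
    have key : ∀ z ∈ Metric.closedBall (v k) r, ‖dh z - dh (v k)‖ ≤ (c : ℝ) := by
      intro z hz
      have hzS : z ∈ S := hballS k (Metric.closedBall_subset_closedBall hr1 hz)
      have hvS : v k ∈ S := hballS k (Metric.mem_closedBall_self zero_le_one)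
      have hd : dist z (v k) < δ := lt_of_le_of_lt (Metric.mem_closedBall.1 hz) hrδ
      have := hδ z hzS (v k) hvS hd
      rw [dist_eq_norm] at this
      rw [hcc]
      exact this.le
    have hmain :=
      Convex.norm_image_sub_le_of_norm_hasFDerivWithin_le
        (f := fun z => h z - dh (v k) z) (f' := fun z => dh z - dh (v k))
        (fun z hz => ((hderiv z).sub ((dh (v k)).hasFDerivAt)).hasFDerivWithinAt)
        key (convex_closedBall (v k) r) hy hx
    have heq : h x - dh (v k) x - (h y - dh (v k) y) = h x - h y - dh (v k) (x - y) := by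
      rw [map_sub]; abel
    rw [heq] at hmain
    exact hmain
  -- the key strict inequality for injectivity
  have hclt : ∀ k, c < (‖((T k).symm : E →L[ℝ] E)‖₊)⁻¹ := by
    intro k
    rw [← NNReal.coe_lt_coe, NNReal.coe_inv, coe_nnnorm, hcc, ← one_div]
    exact one_div_lt_one_div_of_lt (hNpos k)
      (lt_of_le_of_lt (hC k) (by simp only [hC'def]; linarith))
  -- existence of zeros near v k
  have hsurj : ∀ k, ‖h (v k)‖ ≤ r / (2 * C') →
      ∃ w, h w = 0 ∧ ‖w - v k‖ ≤ 2 * C' * ‖h (v k)‖ := by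
    intro k hk
    set ε : ℝ := 2 * C' * ‖h (v k)‖ with hεdef
    have hε0 : 0 ≤ ε := by positivity
    have hεr : ε ≤ r := by
      have := mul_le_mul_of_nonneg_left hk (by positivity : (0:ℝ) ≤ 2 * C')
      rw [mul_div_cancel₀ _ (by positivity : (2 * C' : ℝ) ≠ 0)] at this
      simpa [hεdef] using this
    have hsub : Metric.closedBall (v k) ε ⊆ Metric.closedBall (v k) r :=
      Metric.closedBall_subset_closedBall hεr
    have happrox : ApproximatesLinearOn h ((T k : E →L[ℝ] E))
        (Metric.closedBall (v k) ε) c := by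
      rw [hT k]
      exact fun x hx y hy => approx k x (hsub hx) y (hsub hy)
    have hsOn := happrox.surjOn_closedBall_of_nonlinearRightInverse
      (T k).toNonlinearRightInverse hε0 (Set.Subset.refl _)
    have hNeq : ((T k).toNonlinearRightInverse.nnnorm : ℝ)
        = ‖((T k).symm : E →L[ℝ] E)‖ := rfl
    have hmem : (0 : E) ∈ Metric.closedBall (h (v k))
        (((((T k).toNonlinearRightInverse.nnnorm : ℝ))⁻¹ - (c : ℝ)) * ε) := by
      rw [Metric.mem_closedBall, dist_zero_left]
      have hinv : 1 / C' ≤ (((T k).toNonlinearRightInverse.nnnorm : ℝ))⁻¹ := by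
        rw [hNeq, ← one_div]
        exact one_div_le_one_div_of_le (hNpos k)
          ((hC k).trans (by simp only [hC'def]; linarith))
      have heq2 : 1 / C' = 2 * (1 / (2 * C')) := by
        field_simp
      have hcoef : 1 / (2 * C') ≤ (((T k).toNonlinearRightInverse.nnnorm : ℝ))⁻¹ - (c : ℝ) := by
        rw [hcc]; linarith
      calc ‖h (v k)‖ = (1 / (2 * C')) * ε := by
            rw [hεdef, one_div, inv_mul_cancel_left₀ (by positivity : (2 * C' : ℝ) ≠ 0)]
        _ ≤ _ := mul_le_mul_of_nonneg_right hcoef hε0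
    obtain ⟨w, hwball, hw0⟩ := hsOn hmem
    refine ⟨w, hw0, ?_⟩
    have := Metric.mem_closedBall.1 hwball
    rwa [dist_eq_norm] at this
  -- choice of k₀
  have hnorm : Tendsto (fun k => ‖h (v k)‖) atTop (nhds 0) := by
    simpa using hzero.norm
  obtain ⟨k₀, hk₀⟩ := eventually_atTop.1
    (hnorm.eventually_lt_const (by positivity : (0:ℝ) < r / (2 * C')))
  -- construction of u
  have hexist : ∀ k, ∃ w : E, k₀ ≤ k → h w = 0 ∧ ‖w - v k‖ ≤ 2 * C' * ‖h (v k)‖ := by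
    intro k
    by_cases hk : k₀ ≤ k
    · obtain ⟨w, hw1, hw2⟩ := hsurj k (hk₀ k hk).le
      exact ⟨w, fun _ => ⟨hw1, hw2⟩⟩
    · exact ⟨v k, fun h' => absurd h' hk⟩
  choose u hu using hexist
  have hutend : Tendsto (fun k => ‖u k - v k‖) atTop (nhds 0) := by
    have hub : Tendsto (fun k => 2 * C' * ‖h (v k)‖) atTop (nhds 0) := by
      have := hnorm.const_mul (2 * C')
      simpa using this
    exact squeeze_zero' (Eventually.of_forall fun k => norm_nonneg _)
      (eventually_atTop.2 ⟨k₀, fun k hk => (hu k hk).2⟩) hub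
  refine ⟨k₀, u, fun k hk => (hu k hk).1, hutend, ?_⟩
  -- uniqueness
  intro u' hu'zero hu'tend
  have h1 : ∀ᶠ k in atTop, ‖u' k - v k‖ < r := hu'tend.eventually_lt_const hrpos
  have h2 : ∀ᶠ k in atTop, ‖u k - v k‖ < r := hutend.eventually_lt_const hrpos
  filter_upwards [h1, h2, hu'zero, eventually_ge_atTop k₀] with k hk1 hk2 hk3 hk4
  have happrox : ApproximatesLinearOn h ((T k : E →L[ℝ] E))
      (Metric.closedBall (v k) r) c := by
    rw [hT k]; exact approx k
  have hinj := happrox.injOn (Or.inr (hclt k))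
  have hm1 : u' k ∈ Metric.closedBall (v k) r := by
    rw [Metric.mem_closedBall, dist_eq_norm]; exact hk1.le
  have hm2 : u k ∈ Metric.closedBall (v k) r := by
    rw [Metric.mem_closedBall, dist_eq_norm]; exact hk2.le
  exact hinj hm1 hm2 (by rw [hk3, (hu k hk4).1])
end

section
/- Assume (H1) and (H3), fix α > 0, and let u ∈ H^1(ℝ^N) be a freely nondegenerate critical point of J_α = Φ|_{Σ_α} with Lagrange multiplier λ and finite Morse index m(u), with z_u := B^{-1}Su where B = D²Φ(u) − λS. Then: (b) if (z_u, u)_2 > 0, the free Morse index satisfies m_f(u) = m(u); (c) if (z_u, u)_2 < 0, then m_f(u) = m(u) + 1. -/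
noncomputable section

open MeasureTheory Filter

/-- Euclidean space `ℝ^N`. -/
abbrev RN (N : ℕ) : Type := EuclideanSpace ℝ (Fin N)

/-- The (real) inner product on `ℝ^N`. -/
def rinner {N : ℕ} (x y : RN N) : ℝ := inner ℝ x y

/-- Smooth compactly supported test functions. -/
def IsTest {N : ℕ} (φ : RN N → ℝ) : Prop :=
  ContDiff ℝ (⊤ : ℕ∞) φ ∧ HasCompactSupport φ

/-- An element of `H¹(ℝ^N)`: an `L²` function together with an `L²` weak gradient. -/
structure H1 (N : ℕ) where
  u : RN N → ℝ
  du : RN N → RN N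
  memL2 : MemLp u 2 (volume : Measure (RN N))
  dmemL2 : MemLp du 2 (volume : Measure (RN N))
  weakGrad : ∀ φ : RN N → ℝ, IsTest φ → ∀ y : RN N,
    ∫ x, u x * fderiv ℝ φ x y = - ∫ x, rinner (du x) y * φ x

namespace H1

variable {N : ℕ}

/-- The `L²` inner product `(v,w)₂`. -/
def l2 (v w : H1 N) : ℝ := ∫ x, v.u x * w.u x

/-- The squared `L²` norm `|v|₂²`. -/
def l2nsq (v : H1 N) : ℝ := ∫ x, (v.u x) ^ 2

/-- The standard `H¹` scalar product. -/
def std (v w : H1 N) : ℝ := ∫ x, (rinner (v.du x) (w.du x) + v.u x * w.u x)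

/-- The `H¹` scalar product `⟨v,w⟩ = ∫ (∇v·∇w + V v w)` associated with the potential `V`. -/
def ipV (V : RN N → ℝ) (v w : H1 N) : ℝ :=
  ∫ x, (rinner (v.du x) (w.du x) + V x * v.u x * w.u x)

end H1

/-- The squared standard `H¹` distance. -/
def dH1sq {N : ℕ} (v w : H1 N) : ℝ :=
  ∫ x, (‖v.du x - w.du x‖ ^ 2 + (v.u x - w.u x) ^ 2)

/-- Hypothesis (H1): `V ∈ L^∞(ℝ^N)`. -/
def HypV {N : ℕ} (V : RN N → ℝ) : Prop :=
  Measurable V ∧ ∃ C : ℝ, ∀ x, |V x| ≤ C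

/-- Hypothesis (H2): `V` is 1-periodic in all coordinates. -/
def Periodic1 {N : ℕ} (V : RN N → ℝ) : Prop :=
  ∀ x : RN N, ∀ i : Fin N, V (x + EuclideanSpace.single i (1 : ℝ)) = V x

/-- Hypothesis (H3) on the nonlinearity `f`. -/
def HypF (N : ℕ) (f : ℝ → ℝ) : Prop :=
  ContDiff ℝ 1 f ∧ f 0 = 0 ∧ deriv f 0 = 0 ∧
  (if 3 ≤ N then
      Tendsto (fun s => deriv f s / |s| ^ (2 * (N : ℝ) / ((N : ℝ) - 2) - 2))
        (cocompact ℝ) (nhds 0)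
    else
      ∃ p : ℝ, 2 < p ∧
        Tendsto (fun s => deriv f s / |s| ^ (p - 2)) (cocompact ℝ) (nhds 0))

/-- Hypothesis (H4): `f(s)/|s|` is nondecreasing and `f(s)s > 0` for `s ≠ 0`. -/
def HypF4 (f : ℝ → ℝ) : Prop :=
  Monotone (fun s => f s / |s|) ∧ ∀ s : ℝ, s ≠ 0 → 0 < f s * s

/-- `u` is a weak solution of `-eps2·Δu + V u - f(u) = lam·u`, i.e. a critical point of the
(`eps2`-weighted) energy functional restricted to its `L²`-sphere, with Lagrange multiplier
`lam`. -/
def IsCrit {N : ℕ} (eps2 : ℝ) (V : RN N → ℝ) (f : ℝ → ℝ) (lam : ℝ) (u : H1 N) : Prop :=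
  ∀ v : H1 N,
    (∫ x, (eps2 * rinner (u.du x) (v.du x) + V x * u.u x * v.u x - f (u.u x) * v.u x))
      = lam * ∫ x, u.u x * v.u x

/-- The Hessian bilinear form of the restricted functional at a critical point with multiplier
`lam`; `fp` is the coefficient function `x ↦ f'(u(x))`. -/
def Qform {N : ℕ} (eps2 : ℝ) (V fp : RN N → ℝ) (lam : ℝ) (v w : H1 N) : ℝ :=
  ∫ x, (eps2 * rinner (v.du x) (w.du x) + (V x - lam) * v.u x * w.u x
        - fp x * v.u x * w.u x)

/-- `z` is a weak solution of the linearized equation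
`-eps2·Δz + (V - lam) z - f'(u) z = g`, where the functional `g ∈ H^{-1}` is represented as
`v ↦ ∫ (G·∇v + h v)` with `G, h ∈ L²`. -/
def LinSol {N : ℕ} (eps2 : ℝ) (V fp : RN N → ℝ) (lam : ℝ) (z : H1 N)
    (G : RN N → RN N) (h : RN N → ℝ) : Prop :=
  ∀ v : H1 N, Qform eps2 V fp lam z v = ∫ x, (rinner (G x) (v.du x) + h x * v.u x)

/-- The linearized operator is an isomorphism of `H¹`: the linearized equation is uniquely
weakly solvable for every right hand side in `H^{-1}`. -/
def FreeNondeg {N : ℕ} (eps2 : ℝ) (V fp : RN N → ℝ) (lam : ℝ) : Prop :=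
  ∀ (G : RN N → RN N) (h : RN N → ℝ),
    MemLp G 2 (volume : Measure (RN N)) → MemLp h 2 (volume : Measure (RN N)) →
    (∃ z : H1 N, LinSol eps2 V fp lam z G h) ∧
    (∀ z z' : H1 N, LinSol eps2 V fp lam z G h → LinSol eps2 V fp lam z' G h →
      z.u =ᵐ[(volume : Measure (RN N))] z'.u)

/-- `u` is a fully nondegenerate critical point (with multiplier `lam`): the linearized
equation is uniquely solvable for every right hand side, and for the right hand side `u`
the solution `z_u` satisfies `∫ u z_u ≠ 0`. -/
def FullyNondeg {N : ℕ} (eps2 : ℝ) (V fp : RN N → ℝ) (lam : ℝ) (u : H1 N) : Prop :=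
  FreeNondeg eps2 V fp lam ∧
  ∀ z : H1 N, LinSol eps2 V fp lam z (fun _ => 0) u.u → (∫ x, u.u x * z.u x) ≠ 0

/-- `v` is tangent to the sphere `Σ_α` at `u`, i.e. `(v,u)₂ = 0`. -/
def Tang {N : ℕ} (u v : H1 N) : Prop := (∫ x, v.u x * u.u x) = 0

/-- There is an `m`-dimensional subspace of `{v | P v}` on which the quadratic form of `Q`
is negative definite.  (Negative definiteness forces the witnesses to be linearly
independent in `L²`.) -/
def NegSpan {N : ℕ} (Q : H1 N → H1 N → ℝ) (P : H1 N → Prop) (m : ℕ) : Prop :=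
  ∃ vs : Fin m → H1 N, (∀ i, P (vs i)) ∧
    ∀ c : Fin m → ℝ, c ≠ 0 → (∑ i, ∑ j, c i * c j * Q (vs i) (vs j)) < 0

/-- The Morse index of the form `Q` on `{v | P v}` equals `m`. -/
def HasMorse {N : ℕ} (Q : H1 N → H1 N → ℝ) (P : H1 N → Prop) (m : ℕ) : Prop :=
  NegSpan Q P m ∧ ¬ NegSpan Q P (m + 1)

/-- Nondegeneracy of a constrained critical point: `P ∘ B` restricted to the tangent space
at `u` is a bijection of the tangent space (`P` the orthogonal projection onto it). -/
def NondegTangent {N : ℕ} (eps2 : ℝ) (V fp : RN N → ℝ) (lam : ℝ) (u : H1 N) : Prop :=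
  ∀ w : H1 N, Tang u w →
    (∃ z : H1 N, Tang u z ∧ ∀ v : H1 N, Tang u v →
        Qform eps2 V fp lam z v
          = ∫ x, (eps2 * rinner (w.du x) (v.du x) + V x * w.u x * v.u x)) ∧
    (∀ z z' : H1 N,
      (Tang u z ∧ ∀ v : H1 N, Tang u v →
        Qform eps2 V fp lam z v
          = ∫ x, (eps2 * rinner (w.du x) (v.du x) + V x * w.u x * v.u x)) →
      (Tang u z' ∧ ∀ v : H1 N, Tang u v →
        Qform eps2 V fp lam z' v
          = ∫ x, (eps2 * rinner (w.du x) (v.du x) + V x * w.u x * v.u x)) →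
      z.u =ᵐ[(volume : Measure (RN N))] z'.u)

/-- Embedding of an integer lattice point into `ℝ^N`. -/
def zToR {N : ℕ} (a : Fin N → ℤ) : RN N :=
  (EuclideanSpace.equiv (Fin N) ℝ).symm fun j => (a j : ℝ)

/-- The squared `H¹` distance between `u` and the sum of the translates of `ubar` by the
lattice points `a 1, …, a n`. -/
def distSumSq {N n : ℕ} (u ubar : H1 N) (a : Fin n → Fin N → ℤ) : ℝ :=
  ∫ x, (‖u.du x - ∑ i, ubar.du (x - zToR (a i))‖ ^ 2
        + (u.u x - ∑ i, ubar.u (x - zToR (a i))) ^ 2)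

/-- The bottom of the spectrum of `-Δ + V` on `L²(ℝ^N)`, characterized variationally as the
infimum of the Rayleigh quotients over `H¹`. -/
def specInf {N : ℕ} (V : RN N → ℝ) : ℝ :=
  sInf {r : ℝ | ∃ v : H1 N, (∫ x, (v.u x) ^ 2) = 1 ∧
    r = ∫ x, (‖v.du x‖ ^ 2 + V x * (v.u x) ^ 2)}

/-- The bottom of the essential spectrum of `-Δ + V`, via Persson's characterization. -/
def essSpecInf {N : ℕ} (V : RN N → ℝ) : ℝ :=
  sSup {r : ℝ | ∃ R : ℝ, ∀ v : H1 N,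
    (∀ᵐ x ∂(volume : Measure (RN N)), ‖x‖ ≤ R → v.u x = 0) →
    r * ∫ x, (v.u x) ^ 2 ≤ ∫ x, (‖v.du x‖ ^ 2 + V x * (v.u x) ^ 2)}
section MorseAux

open MeasureTheory
open scoped ENNReal

variable {N : ℕ}

lemma mulL2 {f g : RN N → ℝ} (hf : MemLp f 2 (volume : Measure (RN N)))
    (hg : MemLp g 2 (volume : Measure (RN N))) :
    Integrable (fun x => f x * g x) (volume : Measure (RN N)) := by
  have h : (1 : ℝ≥0∞) / 1 = 1 / 2 + 1 / 2 := by
    rw [ENNReal.add_halves, div_one]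
  have h2 := hg.smul (φ := f) hf (r := 1)
  rw [memLp_one_iff_integrable] at h2
  exact h2

lemma innerL2 {F G : RN N → RN N} (hF : MemLp F 2 (volume : Measure (RN N)))
    (hG : MemLp G 2 (volume : Measure (RN N))) :
    Integrable (fun x => rinner (F x) (G x)) (volume : Measure (RN N)) := by
  have hb : Integrable (fun x => ‖F x‖ * ‖G x‖) (volume : Measure (RN N)) :=
    mulL2 hF.norm hG.norm
  refine hb.mono' (AEStronglyMeasurable.inner hF.1 hG.1) ?_
  filter_upwards with x
  rw [Real.norm_eq_abs]
  exact abs_real_inner_le_norm (F x) (G x)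

lemma test_memL2 {φ : RN N → ℝ} (hφ : IsTest φ) : MemLp φ 2 (volume : Measure (RN N)) :=
  hφ.1.continuous.memLp_of_hasCompactSupport hφ.2

lemma testD_memL2 {φ : RN N → ℝ} (hφ : IsTest φ) (y : RN N) :
    MemLp (fun x => fderiv ℝ φ x y) 2 (volume : Measure (RN N)) := by
  have hc : Continuous fun x => fderiv ℝ φ x := hφ.1.continuous_fderiv (by simp)
  have hcy : Continuous fun x => fderiv ℝ φ x y := hc.clm_apply continuous_const
  exact hcy.memLp_of_hasCompactSupport (hφ.2.fderiv_apply ℝ y)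

lemma innerY_memL2 {F : RN N → RN N} (hF : MemLp F 2 (volume : Measure (RN N))) (y : RN N) :
    MemLp (fun x => rinner (F x) y) 2 (volume : Measure (RN N)) := by
  refine MemLp.of_le_mul (c := ‖y‖) hF.norm
    (AEStronglyMeasurable.inner hF.1 aestronglyMeasurable_const) ?_
  filter_upwards with x
  rw [Real.norm_eq_abs, norm_norm]
  calc |rinner (F x) y| ≤ ‖F x‖ * ‖y‖ := abs_real_inner_le_norm (F x) y
    _ = ‖y‖ * ‖F x‖ := mul_comm _ _

end MorseAux
section MorseAux2

open MeasureTheory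
open scoped ENNReal

variable {N : ℕ}

/-- The integrand of the Hessian form, in collected shape. -/
def QI (V fp : RN N → ℝ) (lam : ℝ) (v w : H1 N) : RN N → ℝ :=
  fun x => rinner (v.du x) (w.du x) + (V x - lam - fp x) * (v.u x * w.u x)

lemma qform_eq (V fp : RN N → ℝ) (lam : ℝ) (v w : H1 N) :
    Qform 1 V fp lam v w = ∫ x, QI V fp lam v w x := by
  unfold Qform QI
  congr 1
  funext x
  ring

lemma qform_comm (V fp : RN N → ℝ) (lam : ℝ) (v w : H1 N) :
    Qform 1 V fp lam v w = Qform 1 V fp lam w v := by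
  unfold Qform
  congr 1
  funext x
  unfold rinner
  rw [real_inner_comm]
  ring

lemma cross_integrable {V fp : RN N → ℝ} {lam : ℝ}
    (hg : AEStronglyMeasurable (fun x => V x - lam - fp x) (volume : Measure (RN N)))
    {v w : H1 N}
    (hv : Integrable (QI V fp lam v v) (volume : Measure (RN N)))
    (hw : Integrable (QI V fp lam w w) (volume : Measure (RN N))) :
    Integrable (QI V fp lam v w) (volume : Measure (RN N)) := by
  set g : RN N → ℝ := fun x => V x - lam - fp x with hgdef
  have hgv2 : Integrable (fun x => g x * (v.u x * v.u x)) (volume : Measure (RN N)) := by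
    have h1 := hv.sub (innerL2 v.dmemL2 v.dmemL2)
    refine h1.congr ?_
    filter_upwards with x
    simp only [Pi.sub_apply, QI]
    ring
  have hgw2 : Integrable (fun x => g x * (w.u x * w.u x)) (volume : Measure (RN N)) := by
    have h1 := hw.sub (innerL2 w.dmemL2 w.dmemL2)
    refine h1.congr ?_
    filter_upwards with x
    simp only [Pi.sub_apply, QI]
    ring
  have hgvw : Integrable (fun x => g x * (v.u x * w.u x)) (volume : Measure (RN N)) := by
    have hD : Integrable (fun x => |g x * (v.u x * v.u x)| / 2 + |g x * (w.u x * w.u x)| / 2)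
        (volume : Measure (RN N)) := (hgv2.abs.div_const 2).add (hgw2.abs.div_const 2)
    refine hD.mono' (hg.mul ((v.memL2.1).mul (w.memL2.1))) ?_
    filter_upwards with x
    rw [Real.norm_eq_abs]
    simp only [abs_mul]
    have h2 : |v.u x| * |w.u x| ≤ (|v.u x| * |v.u x| + |w.u x| * |w.u x|) / 2 := by
      nlinarith [sq_nonneg (|v.u x| - |w.u x|)]
    nlinarith [abs_nonneg (g x), abs_nonneg (v.u x), abs_nonneg (w.u x),
      mul_le_mul_of_nonneg_left h2 (abs_nonneg (g x))]
  have hin := innerL2 v.dmemL2 w.dmemL2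
  refine (hin.add hgvw).congr ?_
  filter_upwards with x
  simp [QI, hgdef]

end MorseAux2
section MorseAux3

open MeasureTheory
open scoped ENNReal

variable {N : ℕ}

lemma int_cmul (c : ℝ) (F : RN N → ℝ) :
    ∫ x, c * F x ∂(volume : Measure (RN N)) = c * ∫ x, F x ∂(volume : Measure (RN N)) := by
  simpa [smul_eq_mul] using integral_smul c F

/-- Finite linear combinations of `H¹` elements. -/
def H1.lc {N n : ℕ} (b : Fin n → ℝ) (vs : Fin n → H1 N) : H1 N where
  u := fun x => ∑ i, b i * (vs i).u x
  du := fun x => ∑ i, b i • (vs i).du x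
  memL2 := by
    apply memLp_finset_sum Finset.univ
    intro i _
    exact ((vs i).memL2).const_mul (b i)
  dmemL2 := by
    apply memLp_finset_sum Finset.univ
    intro i _
    exact ((vs i).dmemL2).const_smul (b i)
  weakGrad := by
    intro φ hφ y
    have hD2 := testD_memL2 hφ y
    have hφ2 := test_memL2 hφ
    have hInt1 : ∀ i : Fin n, Integrable (fun x => (vs i).u x * fderiv ℝ φ x y)
        (volume : Measure (RN N)) := fun i => mulL2 (vs i).memL2 hD2
    have hInt2 : ∀ i : Fin n, Integrable (fun x => rinner ((vs i).du x) y * φ x)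
        (volume : Measure (RN N)) := fun i => mulL2 (innerY_memL2 (vs i).dmemL2 y) hφ2
    calc ∫ x, (∑ i, b i * (vs i).u x) * fderiv ℝ φ x y
        = ∫ x, ∑ i, b i * ((vs i).u x * fderiv ℝ φ x y) := by
          congr 1; funext x; rw [Finset.sum_mul]
          exact Finset.sum_congr rfl fun i _ => by ring
      _ = ∑ i, ∫ x, b i * ((vs i).u x * fderiv ℝ φ x y) :=
          integral_finset_sum _ fun i _ => (hInt1 i).const_mul (b i)
      _ = ∑ i, b i * ∫ x, (vs i).u x * fderiv ℝ φ x y :=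
          Finset.sum_congr rfl fun i _ => int_cmul _ _
      _ = ∑ i, b i * -∫ x, rinner ((vs i).du x) y * φ x :=
          Finset.sum_congr rfl fun i _ => by rw [(vs i).weakGrad φ hφ y]
      _ = -∑ i, ∫ x, b i * (rinner ((vs i).du x) y * φ x) := by
          rw [← Finset.sum_neg_distrib]
          exact Finset.sum_congr rfl fun i _ => by rw [int_cmul]; ring
      _ = -∫ x, ∑ i, b i * (rinner ((vs i).du x) y * φ x) := by
          rw [integral_finset_sum _ fun i _ => (hInt2 i).const_mul (b i)]
      _ = -∫ x, rinner (∑ i, b i • (vs i).du x) y * φ x := by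
          congr 1
          congr 1
          funext x
          unfold rinner
          rw [sum_inner, Finset.sum_mul]
          exact Finset.sum_congr rfl fun i _ => by rw [real_inner_smul_left]; ring

lemma lc_u {n : ℕ} (b : Fin n → ℝ) (vs : Fin n → H1 N) (x : RN N) :
    (H1.lc b vs).u x = ∑ i, b i * (vs i).u x := rfl

lemma lc_du {n : ℕ} (b : Fin n → ℝ) (vs : Fin n → H1 N) (x : RN N) :
    (H1.lc b vs).du x = ∑ i, b i • (vs i).du x := rfl

lemma L_lc (u : H1 N) {n : ℕ} (b : Fin n → ℝ) (vs : Fin n → H1 N) :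
    ∫ x, u.u x * (H1.lc b vs).u x = ∑ i, b i * ∫ x, u.u x * (vs i).u x := by
  calc ∫ x, u.u x * (H1.lc b vs).u x = ∫ x, ∑ i, b i * (u.u x * (vs i).u x) := by
        congr 1; funext x; rw [lc_u, Finset.mul_sum]
        exact Finset.sum_congr rfl fun i _ => by ring
    _ = ∑ i, ∫ x, b i * (u.u x * (vs i).u x) :=
        integral_finset_sum _ fun i _ => (mulL2 u.memL2 (vs i).memL2).const_mul (b i)
    _ = ∑ i, b i * ∫ x, u.u x * (vs i).u x :=
        Finset.sum_congr rfl fun i _ => int_cmul _ _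

lemma qform_lc {V fp : RN N → ℝ} {lam : ℝ} {n k : ℕ}
    (b : Fin n → ℝ) (vs : Fin n → H1 N) (c : Fin k → ℝ) (ws : Fin k → H1 N)
    (hint : ∀ i j, Integrable (QI V fp lam (vs i) (ws j)) (volume : Measure (RN N))) :
    Qform 1 V fp lam (H1.lc b vs) (H1.lc c ws)
      = ∑ i, ∑ j, b i * c j * Qform 1 V fp lam (vs i) (ws j) := by
  rw [qform_eq]
  have hpt : ∀ x, QI V fp lam (H1.lc b vs) (H1.lc c ws) x
      = ∑ i, ∑ j, b i * c j * QI V fp lam (vs i) (ws j) x := by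
    intro x
    unfold QI
    rw [lc_du, lc_du, lc_u, lc_u]
    unfold rinner
    have h1 : (inner ℝ (∑ i, b i • (vs i).du x) (∑ j, c j • (ws j).du x) : ℝ)
        = ∑ i, ∑ j, b i * c j * (inner ℝ ((vs i).du x) ((ws j).du x) : ℝ) := by
      rw [sum_inner]
      refine Finset.sum_congr rfl fun i _ => ?_
      rw [inner_sum]
      refine Finset.sum_congr rfl fun j _ => ?_
      rw [real_inner_smul_left, real_inner_smul_right]; ring
    have h2 : (∑ i, b i * (vs i).u x) * (∑ j, c j * (ws j).u x)
        = ∑ i, ∑ j, (b i * (vs i).u x) * (c j * (ws j).u x) :=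
      Finset.sum_mul_sum _ _ _ _
    rw [h1, h2, Finset.mul_sum, ← Finset.sum_add_distrib]
    refine Finset.sum_congr rfl fun i _ => ?_
    rw [Finset.mul_sum, ← Finset.sum_add_distrib]
    refine Finset.sum_congr rfl fun j _ => ?_
    ring
  rw [show (fun x => QI V fp lam (H1.lc b vs) (H1.lc c ws) x)
      = fun x => ∑ i, ∑ j, b i * c j * QI V fp lam (vs i) (ws j) x from funext hpt]
  rw [integral_finset_sum _ fun i _ =>
    integrable_finset_sum _ fun j _ => ((hint i j).const_mul _)]
  refine Finset.sum_congr rfl fun i _ => ?_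
  rw [integral_finset_sum _ fun j _ => (hint i j).const_mul _]
  refine Finset.sum_congr rfl fun j _ => ?_
  rw [int_cmul, qform_eq]

end MorseAux3
section MorseAux4

open MeasureTheory
open scoped ENNReal

variable {N : ℕ}

/-- The pairing `v ↦ ∫ u v`. -/
def Lfun {N : ℕ} (u v : H1 N) : ℝ := ∫ x, u.u x * v.u x

lemma Lfun_lc (u : H1 N) {n : ℕ} (b : Fin n → ℝ) (vs : Fin n → H1 N) :
    Lfun u (H1.lc b vs) = ∑ i, b i * Lfun u (vs i) :=
  L_lc u b vs

lemma tang_iff (u v : H1 N) : Tang u v ↔ Lfun u v = 0 := by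
  unfold Tang Lfun
  constructor <;> intro h <;> rw [← h] <;>
    exact integral_congr_ae (Filter.Eventually.of_forall fun x => mul_comm _ _)

lemma sum_single {k : ℕ} (M : Fin k → Fin k → ℝ) (i : Fin k) :
    (∑ a, ∑ b, (if a = i then (1:ℝ) else 0) * (if b = i then (1:ℝ) else 0) * M a b) = M i i := by
  rw [Finset.sum_eq_single i]
  · rw [Finset.sum_eq_single i]
    · simp
    · intro b _ hb; simp [hb]
    · intro hi; exact absurd (Finset.mem_univ i) hi
  · intro a _ ha; simp [ha]
  · intro hi; exact absurd (Finset.mem_univ i) hi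

lemma diag_integrable {V fp : RN N → ℝ} {lam : ℝ} {k : ℕ} (vs : Fin k → H1 N)
    (hneg : ∀ c : Fin k → ℝ, c ≠ 0 →
      (∑ i, ∑ j, c i * c j * Qform 1 V fp lam (vs i) (vs j)) < 0) (i : Fin k) :
    Integrable (QI V fp lam (vs i) (vs i)) (volume : Measure (RN N)) := by
  by_contra hni
  have h0 : Qform 1 V fp lam (vs i) (vs i) = 0 := by
    rw [qform_eq]; exact integral_undef hni
  have hc : (fun j : Fin k => if j = i then (1:ℝ) else 0) ≠ 0 := by
    intro h
    have := congrFun h i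
    simp at this
  have hs := hneg _ hc
  rw [sum_single (fun a b => Qform 1 V fp lam (vs a) (vs b)) i, h0] at hs
  exact lt_irrefl 0 hs

lemma sum_expand {k : ℕ} (c t : Fin k → ℝ) (M : Fin k → Fin k → ℝ) (d : ℝ) :
    (∑ i, ∑ j, (c i * c j * M i j - (c i * t i) * ((c j * t j) * d)))
      = (∑ i, ∑ j, c i * c j * M i j) - (∑ i, c i * t i) ^ 2 * d := by
  simp only [Finset.sum_sub_distrib]
  congr 1
  calc ∑ i, ∑ j, (c i * t i) * ((c j * t j) * d)
      = ∑ i, (c i * t i) * ∑ j, ((c j * t j) * d) :=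
        Finset.sum_congr rfl fun i _ => (Finset.mul_sum _ _ _).symm
    _ = (∑ i, c i * t i) * ∑ j, ((c j * t j) * d) := by conv_lhs => rw [← Finset.sum_mul]
    _ = (∑ i, c i * t i) * ((∑ j, c j * t j) * d) := by conv_lhs => rw [← Finset.sum_mul]
    _ = (∑ i, c i * t i) ^ 2 * d := by ring

lemma sum_collect {n k : ℕ} (e : Fin k → ℝ) (cs : Fin k → Fin n → ℝ) (M : Fin n → Fin n → ℝ) :
    (∑ a, ∑ b, e a * e b * (∑ i, ∑ j, cs a i * cs b j * M i j))
      = ∑ i, ∑ j, (∑ a, e a * cs a i) * (∑ b, e b * cs b j) * M i j := by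
  have h1 : ∀ a b : Fin k, e a * e b * (∑ i, ∑ j, cs a i * cs b j * M i j)
      = ∑ i, ∑ j, (e a * cs a i) * ((e b * cs b j) * M i j) := by
    intro a b
    rw [Finset.mul_sum]
    refine Finset.sum_congr rfl fun i _ => ?_
    rw [Finset.mul_sum]
    refine Finset.sum_congr rfl fun j _ => ?_
    ring
  calc (∑ a, ∑ b, e a * e b * (∑ i, ∑ j, cs a i * cs b j * M i j))
      = ∑ a, ∑ b, ∑ i, ∑ j, (e a * cs a i) * ((e b * cs b j) * M i j) :=
        Finset.sum_congr rfl fun a _ => Finset.sum_congr rfl fun b _ => h1 a b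
    _ = ∑ a, ∑ i, ∑ b, ∑ j, (e a * cs a i) * ((e b * cs b j) * M i j) :=
        Finset.sum_congr rfl fun a _ => Finset.sum_comm
    _ = ∑ i, ∑ a, ∑ b, ∑ j, (e a * cs a i) * ((e b * cs b j) * M i j) :=
        Finset.sum_comm
    _ = ∑ i, ∑ a, ∑ j, ∑ b, (e a * cs a i) * ((e b * cs b j) * M i j) :=
        Finset.sum_congr rfl fun i _ => Finset.sum_congr rfl fun a _ => Finset.sum_comm
    _ = ∑ i, ∑ j, ∑ a, ∑ b, (e a * cs a i) * ((e b * cs b j) * M i j) :=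
        Finset.sum_congr rfl fun i _ => Finset.sum_comm
    _ = ∑ i, ∑ j, (∑ a, e a * cs a i) * (∑ b, e b * cs b j) * M i j := by
        refine Finset.sum_congr rfl fun i _ => Finset.sum_congr rfl fun j _ => ?_
        calc ∑ a, ∑ b, (e a * cs a i) * ((e b * cs b j) * M i j)
            = ∑ a, (e a * cs a i) * ∑ b, ((e b * cs b j) * M i j) :=
              Finset.sum_congr rfl fun a _ => (Finset.mul_sum _ _ _).symm
          _ = (∑ a, e a * cs a i) * ∑ b, ((e b * cs b j) * M i j) := by
              conv_lhs => rw [← Finset.sum_mul]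
          _ = (∑ a, e a * cs a i) * ((∑ b, e b * cs b j) * M i j) := by
              conv_lhs => rw [← Finset.sum_mul]
          _ = (∑ a, e a * cs a i) * (∑ b, e b * cs b j) * M i j := by ring

end MorseAux4
/-- Lemma: Morse index vs. free Morse index.
Assume (H1) and (H3), and let `u` be a freely nondegenerate critical point of
`J_α = Φ|_{Σ_α}` with multiplier `λ`, finite Morse index `m(u)` and `z_u = B⁻¹Su`.
If `(z_u,u)₂ > 0` then the free Morse index satisfies `m_f(u) = m(u)`; if `(z_u,u)₂ < 0`
then `m_f(u) = m(u) + 1`. -/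
theorem morse_vs_free_morse {N : ℕ} (hN : 1 ≤ N) (V : RN N → ℝ) (f : ℝ → ℝ)
    (hV : HypV V) (hf : HypF N f) (hspec : 0 < specInf V)
    (α : ℝ) (hα : 0 < α) (u : H1 N) (lam : ℝ)
    (hcrit : IsCrit 1 V f lam u) (hconstr : (∫ x, (u.u x) ^ 2) = α)
    (hfree : FreeNondeg 1 V (fun x => deriv f (u.u x)) lam)
    (z : H1 N)
    (hz : LinSol 1 V (fun x => deriv f (u.u x)) lam z (fun _ => 0) u.u)
    (m : ℕ)
    (hmorse : HasMorse (Qform 1 V (fun x => deriv f (u.u x)) lam) (Tang u) m) :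
    (0 < (∫ x, z.u x * u.u x) →
      HasMorse (Qform 1 V (fun x => deriv f (u.u x)) lam) (fun _ => True) m) ∧
    ((∫ x, z.u x * u.u x) < 0 →
      HasMorse (Qform 1 V (fun x => deriv f (u.u x)) lam) (fun _ => True) (m + 1)) := by
  classical
  set fp : RN N → ℝ := fun x => deriv f (u.u x) with hfpdef
  have hzL : ∀ v : H1 N, Qform 1 V fp lam z v = Lfun u v := by
    intro v
    rw [hz v]
    unfold Lfun
    refine integral_congr_ae (Filter.Eventually.of_forall fun x => ?_)
    simp [rinner]
  have Qcomm : ∀ a b : H1 N, Qform 1 V fp lam a b = Qform 1 V fp lam b a :=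
    fun a b => qform_comm V fp lam a b
  have hgaesm : AEStronglyMeasurable (fun x => V x - lam - fp x) (volume : Measure (RN N)) := by
    have h1 : Continuous (deriv f) := hf.1.continuous_deriv le_rfl
    exact ((hV.1.aestronglyMeasurable).sub aestronglyMeasurable_const).sub
      (h1.comp_aestronglyMeasurable u.memL2.1)
  have hpair : ∀ a b : H1 N, Integrable (QI V fp lam a a) (volume : Measure (RN N)) →
      Integrable (QI V fp lam b b) (volume : Measure (RN N)) →
      Integrable (QI V fp lam a b) (volume : Measure (RN N)) :=
    fun a b ha hb => cross_integrable hgaesm ha hb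
  have hdz : (∫ x, z.u x * u.u x) = Lfun u z := by
    unfold Lfun
    exact integral_congr_ae (Filter.Eventually.of_forall fun x => mul_comm _ _)
  have hzz_int : Lfun u z ≠ 0 → Integrable (QI V fp lam z z) (volume : Measure (RN N)) := by
    intro hLz
    by_contra hni
    have h0 : Qform 1 V fp lam z z = 0 := by
      rw [qform_eq]; exact integral_undef hni
    exact hLz ((hzL z).symm.trans h0)
  constructor
  -- Case (b)
  · intro hdpos
    rw [hdz] at hdpos
    have hd0 : Lfun u z ≠ 0 := ne_of_gt hdpos
    obtain ⟨hm1, hm2⟩ := hmorse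
    constructor
    · obtain ⟨vs, _, hneg⟩ := hm1
      exact ⟨vs, fun _ => trivial, hneg⟩
    · rintro ⟨vs, -, hneg⟩
      apply hm2
      have hdiag := diag_integrable vs hneg
      have hzz := hzz_int hd0
      set t : Fin (m + 1) → ℝ := fun i => Lfun u (vs i) / Lfun u z with htdef
      have hLt : ∀ a : Fin (m + 1), Lfun u (vs a) = t a * Lfun u z := by
        intro a
        simp only [htdef]
        exact (div_mul_cancel₀ _ hd0).symm
      set w : Fin (m + 1) → H1 N := fun i => H1.lc ![1, -t i] ![vs i, z] with hwdef
      have hQw : ∀ i j, Qform 1 V fp lam (w i) (w j)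
          = Qform 1 V fp lam (vs i) (vs j) - (t i * (t j * Lfun u z))
            - (t j * (t i * Lfun u z)) + t i * t j * Lfun u z := by
        intro i j
        have hint : ∀ a b : Fin 2, Integrable (QI V fp lam (![vs i, z] a) (![vs j, z] b))
            (volume : Measure (RN N)) := by
          intro a b
          fin_cases a <;> fin_cases b <;>
            simp only [Matrix.cons_val_zero, Matrix.cons_val_one, Matrix.head_cons]
          · exact hpair _ _ (hdiag i) (hdiag j)
          · exact hpair _ _ (hdiag i) hzz
          · exact hpair _ _ hzz (hdiag j)
          · exact hpair _ _ hzz hzz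
        simp only [hwdef]
        rw [qform_lc ![1, -t i] ![vs i, z] ![1, -t j] ![vs j, z] hint]
        simp only [Fin.sum_univ_two, Matrix.cons_val_zero, Matrix.cons_val_one, Matrix.head_cons]
        rw [Qcomm (vs i) z, hzL (vs i), hzL (vs j), hzL z, hLt i, hLt j]
        ring
      have hwT : ∀ i, Tang u (w i) := by
        intro i
        rw [tang_iff]
        simp only [hwdef]
        rw [Lfun_lc]
        simp only [Fin.sum_univ_two, Matrix.cons_val_zero, Matrix.cons_val_one, Matrix.head_cons]
        rw [hLt i]
        ring
      refine ⟨w, hwT, fun c hc => ?_⟩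
      have hstep : (∑ i, ∑ j, c i * c j * Qform 1 V fp lam (w i) (w j))
          = ∑ i, ∑ j, (c i * c j * Qform 1 V fp lam (vs i) (vs j)
              - (c i * t i) * ((c j * t j) * Lfun u z)) := by
        refine Finset.sum_congr rfl fun i _ => Finset.sum_congr rfl fun j _ => ?_
        rw [hQw i j]
        ring
      rw [hstep, sum_expand c t (fun i j => Qform 1 V fp lam (vs i) (vs j)) (Lfun u z)]
      have h1 := hneg c hc
      have h2 : 0 ≤ (∑ i, c i * t i) ^ 2 * Lfun u z :=
        mul_nonneg (sq_nonneg _) hdpos.le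
      linarith
  -- Case (c)
  · intro hdneg
    rw [hdz] at hdneg
    obtain ⟨hm1, hm2⟩ := hmorse
    constructor
    · obtain ⟨vs, htang, hneg⟩ := hm1
      refine ⟨Fin.snoc vs z, fun _ => trivial, fun c hc => ?_⟩
      have hQvz : ∀ i, Qform 1 V fp lam (vs i) z = 0 := by
        intro i
        rw [Qcomm (vs i) z, hzL (vs i)]
        exact (tang_iff u (vs i)).mp (htang i)
      have hQzv : ∀ i, Qform 1 V fp lam z (vs i) = 0 := by
        intro i
        rw [hzL (vs i)]
        exact (tang_iff u (vs i)).mp (htang i)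
      simp only [Fin.sum_univ_castSucc, Fin.snoc_castSucc, Fin.snoc_last]
      simp only [hQvz, hQzv, mul_zero, zero_mul, add_zero, Finset.sum_const_zero, zero_add]
      rw [hzL z]
      by_cases hc' : (fun i : Fin m => c i.castSucc) = 0
      · have hcz : ∀ i : Fin m, c i.castSucc = 0 := fun i => congrFun hc' i
        have hclast : c (Fin.last m) ≠ 0 := by
          intro h0
          apply hc
          funext i
          refine Fin.lastCases ?_ ?_ i
          · exact h0
          · intro k; exact hcz k
        simp only [hcz, zero_mul, mul_zero, Finset.sum_const_zero, zero_add]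
        exact mul_neg_of_pos_of_neg (mul_self_pos.mpr hclast) hdneg
      · have h1 : (∑ i : Fin m, ∑ j : Fin m,
            c i.castSucc * c j.castSucc * Qform 1 V fp lam (vs i) (vs j)) < 0 := hneg _ hc'
        have h2 : c (Fin.last m) * c (Fin.last m) * Lfun u z ≤ 0 :=
          mul_nonpos_of_nonneg_of_nonpos (mul_self_nonneg _) hdneg.le
        linarith
    · rintro ⟨vs, -, hneg⟩
      apply hm2
      have hdiag := diag_integrable vs hneg
      obtain ⟨i₀, hi₀⟩ : ∃ i₀ : Fin (m + 1 + 1),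
          ((∃ i, Lfun u (vs i) ≠ 0) → Lfun u (vs i₀) ≠ 0) := by
        by_cases hex : ∃ i, Lfun u (vs i) ≠ 0
        · exact ⟨hex.choose, fun _ => hex.choose_spec⟩
        · exact ⟨0, fun h => absurd h hex⟩
      have hkey : ∀ jj : Fin (m + 1),
          Lfun u (vs (i₀.succAbove jj))
            - Lfun u (vs (i₀.succAbove jj)) / Lfun u (vs i₀) * Lfun u (vs i₀) = 0 := by
        intro jj
        by_cases h0 : Lfun u (vs i₀) = 0
        · have hall : ∀ i, Lfun u (vs i) = 0 := by
            intro i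
            by_contra hi
            exact hi₀ ⟨i, hi⟩ h0
          rw [hall, h0]
          simp
        · rw [div_mul_cancel₀ _ h0]
          ring
      set cs : Fin (m + 1) → Fin (m + 1 + 1) → ℝ := fun k j =>
        (if j = i₀.succAbove k then (1:ℝ) else 0)
          - Lfun u (vs (i₀.succAbove k)) / Lfun u (vs i₀) * (if j = i₀ then 1 else 0)
        with hcsdef
      have hcsσ : ∀ k l : Fin (m + 1), cs l (i₀.succAbove k) = if k = l then 1 else 0 := by
        intro k l
        simp only [hcsdef]
        rw [if_neg (Fin.succAbove_ne i₀ k)]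
        by_cases hkl : k = l
        · subst hkl
          simp
        · rw [if_neg fun h => hkl (Fin.succAbove_right_injective h), if_neg hkl]
          ring
      set ys : Fin (m + 1) → H1 N := fun k => H1.lc (cs k) vs with hysdef
      have hysT : ∀ k, Tang u (ys k) := by
        intro k
        rw [tang_iff]
        simp only [hysdef]
        rw [Lfun_lc]
        have hterm : ∀ j : Fin (m + 1 + 1), cs k j * Lfun u (vs j)
            = (if j = i₀.succAbove k then Lfun u (vs j) else 0)
              - (if j = i₀ then
                  Lfun u (vs (i₀.succAbove k)) / Lfun u (vs i₀) * Lfun u (vs j) else 0) := by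
          intro j
          simp only [hcsdef]
          by_cases h1 : j = i₀.succAbove k
          · by_cases h2 : j = i₀
            · exact absurd (h1.symm.trans h2) (Fin.succAbove_ne i₀ k)
            · simp [h1, h2, Fin.succAbove_ne i₀ k] <;> ring
          · by_cases h2 : j = i₀
            · simp [h1, h2, (Fin.succAbove_ne i₀ k).symm] <;> ring
            · simp [h1, h2]
        rw [Finset.sum_congr rfl fun j _ => hterm j]
        rw [Finset.sum_sub_distrib, Finset.sum_ite_eq', Finset.sum_ite_eq']
        simp only [Finset.mem_univ, if_true]
        exact hkey k
      have hQy : ∀ k l, Qform 1 V fp lam (ys k) (ys l)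
          = ∑ i, ∑ j, cs k i * cs l j * Qform 1 V fp lam (vs i) (vs j) := by
        intro k l
        simp only [hysdef]
        exact qform_lc (cs k) vs (cs l) vs fun i j => hpair _ _ (hdiag i) (hdiag j)
      refine ⟨ys, hysT, fun e he => ?_⟩
      have hval : ∀ k : Fin (m + 1), (∑ l, e l * cs l (i₀.succAbove k)) = e k := by
        intro k
        calc (∑ l, e l * cs l (i₀.succAbove k)) = ∑ l, e l * (if k = l then 1 else 0) :=
            Finset.sum_congr rfl fun l _ => by rw [hcsσ k l]
          _ = e k := by
            rw [Finset.sum_eq_single k]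
            · simp
            · intro l _ hlk
              rw [if_neg (Ne.symm hlk), mul_zero]
            · intro hk
              exact absurd (Finset.mem_univ k) hk
      have hb : (fun j => ∑ k, e k * cs k j) ≠ 0 := by
        obtain ⟨k, hk⟩ := Function.ne_iff.mp he
        refine Function.ne_iff.mpr ⟨i₀.succAbove k, ?_⟩
        show (∑ l, e l * cs l (i₀.succAbove k)) ≠ 0
        rw [hval k]
        exact hk
      calc (∑ i, ∑ j, e i * e j * Qform 1 V fp lam (ys i) (ys j))
          = ∑ k, ∑ l, e k * e l
              * ∑ i, ∑ j, cs k i * cs l j * Qform 1 V fp lam (vs i) (vs j) :=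
            Finset.sum_congr rfl fun k _ => Finset.sum_congr rfl fun l _ => by rw [hQy k l]
        _ = ∑ i, ∑ j, (∑ k, e k * cs k i) * (∑ l, e l * cs l j)
              * Qform 1 V fp lam (vs i) (vs j) :=
            sum_collect e cs _
        _ < 0 := hneg _ hb
end
end
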